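/- Let π be a regular multiforcing, let x ⊆ |π| be finite, and let U₁, …, U_k be finite collections of multitrees in MT(π), each multitree having domain exactly x. Then there exist finitely many multitrees u₁, …, u_n ∈ MT(π), each with domain x, such that (⋃_{p∈U₁}[p]) ∩ ⋯ ∩ (⋃_{p∈U_k}[p]) = [u₁] ∪ ⋯ ∪ [u_n], and for every i ≤ k and j ≤ n there is p ∈ U_i with [u_j] ⊆ [p]. -/

import Mathlib

noncomputable section

/-- Finite binary strings. -/
abbrev Str : Type := List Bool

/-- Points of Cantor space `2^ω`. -/
abbrev Pt : Type := ℕ → Bool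

/-- The length-`n` initial segment of a point of Cantor space, as a string. -/
def seg (a : Pt) (n : ℕ) : Str := (List.range n).map a

/-- A tree: a set of strings closed under initial segments. -/
def IsTree (T : Set Str) : Prop := ∀ ⦃s t : Str⦄, s <+: t → t ∈ T → s ∈ T

/-- A perfect tree: a nonempty tree in which every string has two
incomparable extensions inside the tree. -/
def IsPerfectTree (T : Set Str) : Prop :=
  T.Nonempty ∧ IsTree T ∧
    ∀ s ∈ T, ∃ t₁ t₂, t₁ ∈ T ∧ t₂ ∈ T ∧ s <+: t₁ ∧ s <+: t₂ ∧ ¬ t₁ <+: t₂ ∧ ¬ t₂ <+: t₁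

/-- The restriction `T↾s = {t ∈ T : s ⊆ t or t ⊆ s}`. -/
def Tres (T : Set Str) (s : Str) : Set Str := {t ∈ T | s <+: t ∨ t <+: s}

/-- The set `[T]` of branches of a tree `T`. -/
def branches (T : Set Str) : Set Pt := {a | ∀ n, seg a n ∈ T}

/-- `s` is the stem (root) of `T`: the longest `s ∈ T` with `T = T↾s`. -/
def IsStem (T : Set Str) (s : Str) : Prop :=
  s ∈ T ∧ T = Tres T s ∧ ∀ t ∈ T, T = Tres T t → t <+: s

open Classical in
/-- The stem `root(T)` of a tree (junk value `[]` if there is none). -/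
def stem (T : Set Str) : Str := if h : ∃ s, IsStem T s then h.choose else []

/-- Simple splitting `T→i = T↾(root(T)⌢i)`. -/
def splitOne (T : Set Str) (i : Bool) : Set Str := Tres T (stem T ++ [i])

/-- Iterated splitting `T→u`. -/
def splitIter (T : Set Str) (u : Str) : Set Str := u.foldl splitOne T

/-- Almost disjointness of trees: finite intersection. -/
def AD (S T : Set Str) : Prop := (S ∩ T).Finite

/-- A perfect-tree forcing notion: a nonempty set of perfect trees closed
under restrictions. -/
def IsPTF (P : Set (Set Str)) : Prop :=
  P.Nonempty ∧ (∀ T ∈ P, IsPerfectTree T) ∧ ∀ T ∈ P, ∀ s ∈ T, Tres T s ∈ P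

/-- `A` is relatively clopen in `B` (as a subspace of Cantor space). -/
def ClopenIn (A B : Set Pt) : Prop := IsClopen ((fun x : B => (x : Pt)) ⁻¹' A)

/-- `A` is relatively open in `B` (as a subspace of Cantor space). -/
def OpenIn (A B : Set Pt) : Prop := IsOpen ((fun x : B => (x : Pt)) ⁻¹' A)

/-- A special perfect-tree forcing notion: `P = {T↾s : s ∈ T ∈ A}` for an
antichain (pairwise a.d. set) `A ⊆ P`. -/
def SpecialPTF (P : Set (Set Str)) : Prop :=
  ∃ A ⊆ P, A.Pairwise AD ∧ P = {R | ∃ T ∈ A, ∃ s ∈ T, R = Tres T s}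

/-- A regular perfect-tree forcing notion: `[S] ∩ [T]` is relatively clopen
in `[S]` or in `[T]`, for all `S, T ∈ P`. -/
def RegularPTF (P : Set (Set Str)) : Prop :=
  ∀ S ∈ P, ∀ T ∈ P,
    ClopenIn (branches S ∩ branches T) (branches S) ∨
    ClopenIn (branches S ∩ branches T) (branches T)

/-- `T ⊆ᶠ ⋃ D`: `[T]` is covered by finitely many `[S]`, `S ∈ D`. -/
def SqFin (T : Set Str) (D : Set (Set Str)) : Prop :=
  ∃ D' ⊆ D, D'.Finite ∧ branches T ⊆ ⋃ S ∈ D', branches S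

/-- `P ⊑ Q`: `Q` is a refinement of `P`. -/
def Refines (P Q : Set (Set Str)) : Prop :=
  (∀ T ∈ P, ∃ S ∈ Q, S ⊆ T) ∧
  (∀ S ∈ Q, SqFin S P) ∧
  (∀ S ∈ Q, ∀ T ∈ P, ClopenIn (branches S ∩ branches T) (branches S) ∧ ¬ T ⊆ S)

/-- `D` is dense in `P`. -/
def DenseIn (D P : Set (Set Str)) : Prop := ∀ T ∈ P, ∃ S ∈ D, S ⊆ T

/-- `D` is pre-dense in `P`. -/
def PreDenseIn (D P : Set (Set Str)) : Prop :=
  DenseIn {T ∈ P | ∃ S ∈ D, T ⊆ S} P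

/-- `P ⊑_D Q`: `Q` locks `D` over `P`. -/
def Locks (P D Q : Set (Set Str)) : Prop :=
  Refines P Q ∧ ∀ S ∈ Q, SqFin S D

/-- A finite splitting system of height `n` over `P`. -/
def IsFSS (P : Set (Set Str)) (n : ℕ) (φ : Str → Set Str) : Prop :=
  (∀ s : Str, s.length ≤ n → φ s ∈ P) ∧
  ∀ (s : Str) (i : Bool), s.length < n → φ (s ++ [i]) ⊆ splitOne (φ s) i

/-- The index set `ω₁ × ω`. -/
abbrev Idx : Type 1 := {xi : Ordinal // xi < (Cardinal.aleph 1).ord} × ℕ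

/-- A multitree: a map with finite domain `|p| ⊆ ω₁ × ω` whose values are
perfect trees. -/
structure Multitree : Type 1 where
  dom : Set Idx
  fin : dom.Finite
  val : Idx → Set Str
  perf : ∀ i ∈ dom, IsPerfectTree (val i)

/-- Componentwise ordering of multitrees: `q ≤ p`. -/
def MTle (q p : Multitree) : Prop :=
  p.dom ⊆ q.dom ∧ ∀ i ∈ p.dom, q.val i ⊆ p.val i

/-- Multitrees `p, q` are somewhere almost disjoint. -/
def SomewhereAD (p q : Multitree) : Prop :=
  ∃ i ∈ p.dom ∩ q.dom, AD (p.val i) (q.val i)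

/-- A multiforcing: a map on `|π| ⊆ ω₁ × ω` whose values are perfect-tree
forcing notions. -/
structure Multiforcing : Type 1 where
  dom : Set Idx
  val : Idx → Set (Set Str)
  ptf : ∀ i ∈ dom, IsPTF (val i)

/-- A regular multiforcing: each component is regular. -/
def MFRegular (pi : Multiforcing) : Prop := ∀ i ∈ pi.dom, RegularPTF (pi.val i)

/-- `MT(π)`: the set of multitrees built from `π`. -/
def MT (pi : Multiforcing) : Set Multitree :=
  {p | p.dom ⊆ pi.dom ∧ ∀ i ∈ p.dom, p.val i ∈ pi.val i}

/-- The cofinite-dimensional cube `[p]` determined by a multitree `p`. -/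
def mcube (p : Multitree) : Set (Idx → Pt) :=
  {x | ∀ i ∈ p.dom, x i ∈ branches (p.val i)}

/-!
In a regular perfect-tree forcing, `[S] ∩ [T]` is relatively clopen in `[S]` or in `[T]`,
hence, by compactness, a finite union of branch sets `[S↾s]` (or `[T↾s]`). Over the finite
domain `x`, a product of finite unions of branch sets is a finite union of cubes of multitrees,
so finite unions of cubes are closed under finite intersections. Distributing
`⋂ᵢ ⋃_{p ∈ Uᵢ} [p]` into a union over choice functions `f` with `f i ∈ Uᵢ` and decomposing
each `⋂ᵢ [f i]` gives pieces that lie in `[f i]` for every `i`.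
-/

open Set

section FiniteUnion

variable {α β : Type*}

def IsFiniteUnion (g : β → Set α) (B : Set β) (A : Set α) : Prop :=
  ∃ Z ⊆ B, Z.Finite ∧ A = ⋃ b ∈ Z, g b

variable {g : β → Set α} {B : Set β} {A A' : Set α}

lemma isFiniteUnion_of_mem {b : β} (hb : b ∈ B) : IsFiniteUnion g B (g b) :=
  ⟨{b}, singleton_subset_iff.2 hb, finite_singleton b, by rw [biUnion_singleton]⟩

lemma IsFiniteUnion.mono {B' : Set β} (h : IsFiniteUnion g B A) (hBB' : B ⊆ B') :
    IsFiniteUnion g B' A :=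
  let ⟨Z, hZB, hZ, hA⟩ := h
  ⟨Z, hZB.trans hBB', hZ, hA⟩

lemma IsFiniteUnion.restrict (h : IsFiniteUnion g B A) :
    IsFiniteUnion g {b ∈ B | g b ⊆ A} A := by
  obtain ⟨Z, hZB, hZ, rfl⟩ := h
  exact ⟨Z, fun b hb => ⟨hZB hb, subset_biUnion_of_mem hb⟩, hZ, rfl⟩

lemma IsFiniteUnion.iUnion {ι : Type*} [Finite ι] {A : ι → Set α}
    (h : ∀ i, IsFiniteUnion g B (A i)) : IsFiniteUnion g B (⋃ i, A i) := by
  choose Z hZB hZ hA using h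
  refine ⟨⋃ i, Z i, iUnion_subset hZB, finite_iUnion hZ, ?_⟩
  rw [biUnion_iUnion]
  exact iUnion_congr hA

lemma IsFiniteUnion.inter (hB : ∀ b ∈ B, ∀ b' ∈ B, IsFiniteUnion g B (g b ∩ g b'))
    (hA : IsFiniteUnion g B A) (hA' : IsFiniteUnion g B A') : IsFiniteUnion g B (A ∩ A') := by
  obtain ⟨Z, hZB, hZ, rfl⟩ := hA
  obtain ⟨Z', hZB', hZ', rfl⟩ := hA'
  have := hZ.to_subtype
  have := hZ'.to_subtype
  simp only [biUnion_eq_iUnion, iUnion_inter_iUnion]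
  exact .iUnion fun b => .iUnion fun b' => hB b (hZB b.2) b' (hZB' b'.2)

lemma IsFiniteUnion.iInter_fin (hB : ∀ b ∈ B, ∀ b' ∈ B, IsFiniteUnion g B (g b ∩ g b'))
    {k : ℕ} {A : Fin (k + 1) → Set α} (hA : ∀ i, IsFiniteUnion g B (A i)) :
    IsFiniteUnion g B (⋂ i, A i) := by
  induction k with
  | zero =>
    have h : ⋂ i, A i = A 0 := by ext; simp [Fin.forall_fin_one]
    exact h ▸ hA 0
  | succ k ih =>
    have h : ⋂ i, A i = A 0 ∩ ⋂ i : Fin (k + 1), A i.succ := by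
      ext; simp [Fin.forall_fin_succ]
    rw [h]
    exact (hA 0).inter hB (ih fun i => hA i.succ)

end FiniteUnion

section Cantor

open PiNat

lemma seg_eq_seg_iff {a b : Pt} {n : ℕ} : seg b n = seg a n ↔ b ∈ cylinder a n := by
  simp [seg, mem_cylinder_iff, List.map_inj_left]

lemma seg_prefix_seg (a : Pt) {n m : ℕ} (h : n ≤ m) : seg a n <+: seg a m := by
  rw [List.prefix_iff_eq_take]
  simp [seg, ← List.map_take, List.take_range, Nat.min_eq_left h]

lemma branches_tres_seg (T : Set Str) (a : Pt) (n : ℕ) :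
    branches (Tres T (seg a n)) = branches T ∩ cylinder a n := by
  ext b
  simp only [branches, Tres, mem_ofPred_eq, mem_inter_iff, forall_and, ← seg_eq_seg_iff]
  refine and_congr_right fun _ => ⟨fun h => ?_, fun h m => ?_⟩
  · rcases h n with h | h
    exacts [(h.eq_of_length (by simp [seg])).symm, h.eq_of_length (by simp [seg])]
  · rcases le_total m n with hmn | hnm
    · exact .inr (h ▸ seg_prefix_seg b hmn)
    · exact .inl (h ▸ seg_prefix_seg b hnm)

lemma isClosed_branches (T : Set Str) : IsClosed (branches T) := by
  rw [← isOpen_compl_iff, isOpen_iff_forall_mem_open]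
  intro a ha
  obtain ⟨n, hn⟩ : ∃ n, seg a n ∉ T := by simpa [branches] using ha
  refine ⟨cylinder a n, fun b hb hbT => hn ?_, isOpen_cylinder _ a n, self_mem_cylinder a n⟩
  exact seg_eq_seg_iff.2 hb ▸ hbT n

lemma ClopenIn.isFiniteUnion_tres {S : Set Str} {C : Set Pt} (hC : ClopenIn C (branches S))
    (hCS : C ⊆ branches S) : IsFiniteUnion branches (Tres S '' S) C := by
  have hclosed : IsClosed C := by
    have := (isClosed_branches S).isClosedMap_subtype_val _ hC.1
    rwa [Subtype.image_preimage_coe, inter_eq_right.2 hCS] at this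
  obtain ⟨U, hU, hUC⟩ := isOpen_induced_iff.mp hC.2
  have hCU : C = branches S ∩ U := by
    rw [Subtype.preimage_coe_eq_preimage_coe_iff, inter_eq_right.2 hCS] at hUC
    exact hUC.symm
  have hcyl : ∀ a ∈ U, ∃ n, cylinder a n ⊆ U := by
    intro a ha
    obtain ⟨_, ⟨b, n, rfl⟩, hab, hbU⟩ :=
      (isTopologicalBasis_cylinders _).exists_subset_of_mem_open ha hU
    exact ⟨n, mem_cylinder_iff_eq.1 hab ▸ hbU⟩
  choose! m hm using hcyl
  obtain ⟨t, htC, hCt⟩ := hclosed.isCompact.elim_nhds_subcover (fun a => cylinder a (m a))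
    fun a _ => (isOpen_cylinder _ a _).mem_nhds (self_mem_cylinder a _)
  refine ⟨Tres S '' ((fun a => seg a (m a)) '' t),
    image_mono (image_subset_iff.2 fun a ha => hCS (htC a ha) (m a)),
    (t.finite_toSet.image _).image _, ?_⟩
  simp only [biUnion_image, branches_tres_seg]
  refine Subset.antisymm (fun b hb => ?_) (iUnion₂_subset fun a ha => ?_)
  · obtain ⟨a, ha, hba⟩ := mem_iUnion₂.1 (hCt hb)
    exact mem_iUnion₂.2 ⟨a, ha, hCS hb, hba⟩
  · rw [hCU]
    exact inter_subset_inter_right _ (hm a (hCU ▸ htC a ha).2)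

end Cantor

lemma RegularPTF.isFiniteUnion_branches_inter {P : Set (Set Str)} (hreg : RegularPTF P)
    (hP : IsPTF P) {S T : Set Str} (hS : S ∈ P) (hT : T ∈ P) :
    IsFiniteUnion branches P (branches S ∩ branches T) := by
  have htres : ∀ {R}, R ∈ P → Tres R '' R ⊆ P :=
    fun hR => image_subset_iff.2 fun s hs => hP.2.2 _ hR s hs
  rcases hreg S hS T hT with h | h
  · exact (h.isFiniteUnion_tres inter_subset_left).mono (htres hS)
  · exact (h.isFiniteUnion_tres inter_subset_right).mono (htres hT)

lemma Multitree.ext_of_dom_val {u v : Multitree} (hdom : u.dom = v.dom) (hval : u.val = v.val) :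
    u = v := by
  cases u; cases v; subst hdom hval; rfl

lemma mcube_eq_pi (p : Multitree) : mcube p = p.dom.pi fun i => branches (p.val i) := rfl

-- Values off `x` are pinned to `∅`: otherwise infinitely many multitrees would share a cube.
lemma Multitree.finite_setOf_dom_eq_val_mem {x : Set Idx} (hxf : x.Finite)
    {Z : Idx → Set (Set Str)} (hZ : ∀ i ∈ x, (Z i).Finite) :
    {u : Multitree | u.dom = x ∧ (∀ i ∈ x, u.val i ∈ Z i) ∧ ∀ i ∉ x, u.val i = ∅}.Finite := by
  have := hxf.to_subtype
  have hpi : (univ.pi fun i : x => Z i).Finite := Finite.pi fun i => hZ i i.2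
  refine Finite.of_finite_image (f := fun u (i : x) => u.val i) (hpi.subset ?_)
    fun u hu v hv huv => ext_of_dom_val (hu.1.trans hv.1.symm) (funext fun i => ?_)
  · rintro _ ⟨u, hu, rfl⟩ i -
    exact hu.2.1 i i.2
  · by_cases hi : i ∈ x
    · exact congrFun huv ⟨i, hi⟩
    · rw [hu.2.2 i hi, hv.2.2 i hi]

lemma isFiniteUnion_mcube_pi {pi : Multiforcing} {x : Set Idx} (hxf : x.Finite)
    (hxd : x ⊆ pi.dom) {C : Idx → Set Pt}
    (hC : ∀ i ∈ x, IsFiniteUnion branches (pi.val i) (C i)) :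
    IsFiniteUnion mcube {u ∈ MT pi | u.dom = x} (x.pi C) := by
  classical
  choose! Z hZP hZ hCZ using hC
  refine ⟨_, ?_, Multitree.finite_setOf_dom_eq_val_mem hxf hZ,
    Subset.antisymm (fun y hy => ?_) (iUnion₂_subset fun u hu y hy i hi => ?_)⟩
  · rintro u ⟨rfl, hZu, -⟩
    exact ⟨⟨hxd, fun i hi => hZP i hi (hZu i hi)⟩, rfl⟩
  · have hR : ∀ i ∈ x, ∃ R ∈ Z i, y i ∈ branches R := fun i hi => by
      simpa [hCZ i hi] using hy i hi
    choose! R hRZ hyR using hR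
    let u : Multitree := ⟨x, hxf, fun i => if i ∈ x then R i else ∅, fun i hi => by
      simpa [hi] using (pi.ptf i (hxd hi)).2.1 _ (hZP i hi (hRZ i hi))⟩
    refine mem_iUnion₂.2 ⟨u, ⟨rfl, fun i hi => ?_, fun i hi => if_neg hi⟩, fun i hi => ?_⟩
    · simpa [u, hi] using hRZ i hi
    · simpa [u, hi] using hyR i hi
  · rw [hCZ i (hu.1 ▸ hi)]
    exact mem_biUnion (hu.2.1 i (hu.1 ▸ hi)) (hy i (hu.1.symm ▸ hi))

lemma isFiniteUnion_mcube_inter {pi : Multiforcing} (hreg : MFRegular pi) {x : Set Idx}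
    (hxf : x.Finite) (hxd : x ⊆ pi.dom) {p q : Multitree} (hp : p ∈ {u ∈ MT pi | u.dom = x})
    (hq : q ∈ {u ∈ MT pi | u.dom = x}) :
    IsFiniteUnion mcube {u ∈ MT pi | u.dom = x} (mcube p ∩ mcube q) := by
  rw [mcube_eq_pi, mcube_eq_pi, hp.2, hq.2, ← pi_inter_distrib]
  refine isFiniteUnion_mcube_pi hxf hxd fun i hi => ?_
  exact (hreg i (hxd hi)).isFiniteUnion_branches_inter (pi.ptf i (hxd hi))
    (hp.1.2 i (hp.2 ▸ hi)) (hq.1.2 i (hq.2 ▸ hi))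

/-- Lemma 2.15 (regfm): in a regular multiforcing, an intersection of finite
unions of cubes of multitrees with common finite domain `x` is a finite
union of cubes of multitrees with domain `x`, each refining a cube from
each collection. -/
theorem stmt19 (pi : Multiforcing) (hreg : MFRegular pi)
    (x : Set Idx) (hxf : x.Finite) (hxd : x ⊆ pi.dom)
    (k : ℕ) (hk : 0 < k) (U : Fin k → Set Multitree)
    (hUf : ∀ i, (U i).Finite) (hUm : ∀ i, U i ⊆ MT pi)
    (hUd : ∀ i, ∀ p ∈ U i, p.dom = x) :
    ∃ (n : ℕ) (u : Fin n → Multitree),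
      (∀ j, u j ∈ MT pi ∧ (u j).dom = x) ∧
      (⋂ i, ⋃ p ∈ U i, mcube p) = (⋃ j, mcube (u j)) ∧
      ∀ (i : Fin k) (j : Fin n), ∃ p ∈ U i, mcube (u j) ⊆ mcube p := by
  obtain ⟨k, rfl⟩ := Nat.exists_eq_add_one_of_ne_zero hk.ne'
  have := fun i => (hUf i).to_subtype
  have hdistrib : ⋂ i, ⋃ p ∈ U i, mcube p = ⋃ f : ∀ i, U i, ⋂ i, mcube (f i) := by
    simp only [biUnion_eq_iUnion]
    exact iInf_iSup_eq
  have hmeet : ∀ f : ∀ i, U i, IsFiniteUnion mcube {u ∈ MT pi | u.dom = x} (⋂ i, mcube (f i)) :=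
    fun f => IsFiniteUnion.iInter_fin
      (fun p hp q hq => isFiniteUnion_mcube_inter hreg hxf hxd hp hq)
      fun i => isFiniteUnion_of_mem ⟨hUm i (f i).2, hUd i _ (f i).2⟩
  have hpieces : IsFiniteUnion mcube
      {u ∈ {u ∈ MT pi | u.dom = x} | ∀ i, ∃ p ∈ U i, mcube u ⊆ mcube p}
      (⋂ i, ⋃ p ∈ U i, mcube p) := by
    rw [hdistrib]
    refine .iUnion fun f => (hmeet f).restrict.mono fun u ⟨hu, hsub⟩ => ⟨hu, fun i => ?_⟩
    exact ⟨f i, (f i).2, hsub.trans (iInter_subset _ i)⟩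
  obtain ⟨Z, hZ, hZfin, hUZ⟩ := hpieces
  obtain ⟨n, u, rfl⟩ := hZfin.fin_embedding
  exact ⟨n, u, fun j => (hZ ⟨j, rfl⟩).1, by rw [hUZ, biUnion_range],
    fun i j => (hZ ⟨j, rfl⟩).2 i⟩

end
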